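/- arXiv:1808.08747 — 2 statements merged into one kernel-verified Lean document; each statement's English description precedes it below -/
import Mathlib

section
/- Let C be an HFP(4t_u,2)-code of length 4t. If the dimension of the kernel satisfies dim K(C) > 1, then the length 4t is a power of two. -/
open Finset

abbrev Vec (n : ℕ) := Fin n → ZMod 2

def allOne (n : ℕ) : Vec n := fun _ => 1

def permAct {n : ℕ} (σ : Equiv.Perm (Fin n)) (x : Vec n) : Vec n := fun i => x (σ⁻¹ i)

/-- An Hadamard full propelinear code of length `n`:
an Hadamard code together with a full propelinear structure. -/
structure HFPCode (n : ℕ) where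
  C : Set (Vec n)
  π : Vec n → Equiv.Perm (Fin n)
  zero_mem : (0 : Vec n) ∈ C
  card_eq : C.ncard = 2 * n
  allOne_mem : allOne n ∈ C
  add_allOne_mem : ∀ x ∈ C, x + allOne n ∈ C
  dist_eq : ∀ x ∈ C, ∀ y ∈ C, x ≠ y → y ≠ x + allOne n → 2 * hammingDist x y = n
  mul_mem : ∀ x ∈ C, ∀ y ∈ C, x + permAct (π x) y ∈ C
  π_mul : ∀ x ∈ C, ∀ y ∈ C, π (x + permAct (π x) y) = π x * π y
  π_zero : π 0 = 1
  π_allOne : π (allOne n) = 1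
  π_fixedfree : ∀ x ∈ C, x ≠ 0 → x ≠ allOne n → ∀ i, π x i ≠ i

namespace HFPCode

variable {n : ℕ} (H : HFPCode n)

/-- The propelinear group operation `x * y = x + π_x(y)`. -/
def mul (x y : Vec n) : Vec n := x + permAct (H.π x) y

/-- `*`-powers: `x^0 = e`, `x^(i+1) = x * x^i`. -/
def pow (x : Vec n) : ℕ → Vec n
  | 0 => 0
  | i + 1 => H.mul x (pow x i)

end HFPCode

/-- The kernel `K(C) = {z : z + C = C}`. -/
def kerSet {n : ℕ} (C : Set (Vec n)) : Set (Vec n) := {z | (fun x => z + x) '' C = C}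

/-- Dimension of the kernel of a code. -/
noncomputable def kerDim {n : ℕ} (C : Set (Vec n)) : ℕ :=
  Module.finrank (ZMod 2) (Submodule.span (ZMod 2) (kerSet C))

/-- The rank of a code: dimension of its linear span. -/
noncomputable def rankOf {n : ℕ} (C : Set (Vec n)) : ℕ :=
  Module.finrank (ZMod 2) (Submodule.span (ZMod 2) C)

namespace HFPCode

/-- `C` is an `HFP(4t_u,2)`-code with generators `a`, `b`: `(C,*)` is an abelian group
of order `8t` generated by `a` of order `4t` with `a^{2t} = u` and `b` of order `2`
with `b ∉ ⟨a⟩`, so `(C,*) ≅ C_{4t} × C_2`. -/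
def Is4tu2 (t : ℕ) (H : HFPCode (4 * t)) (a b : Vec (4 * t)) : Prop :=
  a ∈ H.C ∧ b ∈ H.C ∧
  (∀ x ∈ H.C, ∀ y ∈ H.C, H.mul x y = H.mul y x) ∧
  H.pow a (4 * t) = 0 ∧ (∀ j : ℕ, 0 < j → j < 4 * t → H.pow a j ≠ 0) ∧
  H.pow a (2 * t) = allOne (4 * t) ∧
  H.pow b 2 = 0 ∧ b ≠ 0 ∧
  (∀ i : ℕ, b ≠ H.pow a i) ∧
  (∀ x ∈ H.C, ∃ i j : ℕ, x = H.mul (H.pow a i) (H.pow b j))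

/-- `C` is an `HFP(2t,2,2_u)`-code with generators `a`, `b` (and `u`): `(C,*)` is an
abelian group of order `8t` which is the internal direct product `⟨a⟩ × ⟨b⟩ × ⟨u⟩`
with `a` of order `2t` and `b` of order `2`, so `(C,*) ≅ C_{2t} × C_2 × C_2`. -/
def Is2t22u (t : ℕ) (H : HFPCode (4 * t)) (a b : Vec (4 * t)) : Prop :=
  a ∈ H.C ∧ b ∈ H.C ∧
  (∀ x ∈ H.C, ∀ y ∈ H.C, H.mul x y = H.mul y x) ∧
  H.pow a (2 * t) = 0 ∧ (∀ j : ℕ, 0 < j → j < 2 * t → H.pow a j ≠ 0) ∧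
  H.pow b 2 = 0 ∧ b ≠ 0 ∧ allOne (4 * t) ≠ 0 ∧
  (∀ i j k : ℕ, i < 2 * t → j < 2 → k < 2 →
    H.mul (H.mul (H.pow a i) (H.pow b j)) (H.pow (allOne (4 * t)) k) = 0 →
      i = 0 ∧ j = 0 ∧ k = 0) ∧
  (∀ x ∈ H.C, ∃ i j k : ℕ,
    x = H.mul (H.mul (H.pow a i) (H.pow b j)) (H.pow (allOne (4 * t)) k))

/-- `C` is an `HFP(2t,4_u)`-code with generators `a`, `b`: `(C,*)` is an abelian group
of order `8t` which is the internal direct product `⟨a⟩ × ⟨b⟩` with `a` of order `2t`,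
`b` of order `4` and `b² = u`, so `(C,*) ≅ C_{2t} × C_4`. -/
def Is2t4u (t : ℕ) (H : HFPCode (4 * t)) (a b : Vec (4 * t)) : Prop :=
  a ∈ H.C ∧ b ∈ H.C ∧
  (∀ x ∈ H.C, ∀ y ∈ H.C, H.mul x y = H.mul y x) ∧
  H.pow a (2 * t) = 0 ∧ (∀ j : ℕ, 0 < j → j < 2 * t → H.pow a j ≠ 0) ∧
  H.pow b 4 = 0 ∧ (∀ j : ℕ, 0 < j → j < 4 → H.pow b j ≠ 0) ∧
  H.pow b 2 = allOne (4 * t) ∧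
  (∀ i j : ℕ, i < 2 * t → j < 4 → H.mul (H.pow a i) (H.pow b j) = 0 → i = 0 ∧ j = 0) ∧
  (∀ x ∈ H.C, ∃ i j : ℕ, x = H.mul (H.pow a i) (H.pow b j))

/-- The permutation associated to `a` is normalized to
`(1,2,…,2t)(2t+1,…,4t)` (0-indexed here). -/
def NormPiA (t : ℕ) (H : HFPCode (4 * t)) (a : Vec (4 * t)) : Prop :=
  ∀ i : Fin (4 * t), ((H.π a) i).val =
    if i.val < 2 * t then (i.val + 1) % (2 * t) else 2 * t + (i.val + 1) % (2 * t)

/-- The permutation associated to `b` is normalized to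
`(1,2t+1)(2,2t+2)⋯(2t,4t)` (0-indexed here). -/
def NormPiB (t : ℕ) (H : HFPCode (4 * t)) (b : Vec (4 * t)) : Prop :=
  ∀ i : Fin (4 * t), ((H.π b) i).val = (i.val + 2 * t) % (4 * t)

end HFPCode

/-- The vector `(e_{2t}, u_{2t})`: `0` on the first half, `1` on the second half. -/
def euVec (t : ℕ) : Vec (4 * t) := fun i => if i.val < 2 * t then 0 else 1

/-- The vector `ω_{4t} = (1,0,1,0,…,1,0)`. -/
def omegaVec (t : ℕ) : Vec (4 * t) := fun i => if i.val % 2 = 0 then 1 else 0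

/-- The vector `(ω_{2t}, ω_{2t} + u_{2t})`. -/
def omegaCompVec (t : ℕ) : Vec (4 * t) := fun i =>
  if i.val < 2 * t then (if i.val % 2 = 0 then 1 else 0)
  else (if i.val % 2 = 0 then 0 else 1)

/-- `C` is linear if it is an `F₂`-subspace, i.e. coincides with its linear span. -/
def IsLinearCode {n : ℕ} (C : Set (Vec n)) : Prop :=
  C = (Submodule.span (ZMod 2) C : Set (Vec n))

/-!
The codewords form a group `G ≅ C_{4t} × C_2` under `x * y = x + π_x(y)`, which acts on the
coordinates transitively with point stabilisers `{e, u}`. Reading off one coordinate,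
`ψ(g) = (-1)^(g_0)` satisfies `ψ(u g) = -ψ(g)`, and since distinct codewords other than
complements are at distance `2t`, its autocorrelation `∑_g ψ(g) ψ(g w)` vanishes for `w ∉ {e, u}`.

The kernel `K` is a `G`-invariant subspace, and counting `∑_{v ∈ K} ∑_j (-1)^(v_j + v_0)` shows
that `G` acts on `K` through a group of order `|K| / 2`. So if `dim K ≥ 2`, this `2`-group fixes a
nonzero point of `K / ⟨u⟩`, i.e. some `z ∉ {e, u}` with `π_g(z) = z + ε(g) u`; hence
`ψ(g z) = χ(g) ψ(g)` for the nontrivial character `χ = (-1)^ε`. Then `z² ∈ {e, u}`, and combining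
the autocorrelations at `d` and `d z` restricts them to `ker χ`. Depending on `χ(a)` and `χ(b)`
this yields either a parity contradiction or a `±1` sequence `X` with `X_{i+T} = -X_i` whose
periodic autocorrelations at shifts `1` and `2` vanish; the latter is impossible since
`∏ X_i X_{i+1} = -1` while `∏ X_i X_{i+2} = 1`, both being `(-1)^(T/2)`. This leaves `t ≤ 2`.
-/

def zsign (x : ZMod 2) : ℤˣ := if x = 0 then 1 else -1

@[simp] lemma zsign_zero : zsign 0 = 1 := rfl

@[simp] lemma zsign_one : zsign 1 = -1 := rfl

lemma zsign_add (x y : ZMod 2) : zsign (x + y) = zsign x * zsign y := by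
  revert x y; decide

lemma zsign_eq_one_iff (x : ZMod 2) : zsign x = 1 ↔ x = 0 := by
  revert x; decide

lemma sum_zsign_eq {n : ℕ} (x : Vec n) : ∑ i, (zsign (x i) : ℤ) = n - 2 * hammingNorm x := by
  have h : ∀ i, (zsign (x i) : ℤ) = 1 - 2 * if x i ≠ 0 then 1 else 0 := fun i => by
    rcases (by decide : ∀ y : ZMod 2, y = 0 ∨ y = 1) (x i) with h | h <;> simp [h]
  simp only [h, sum_sub_distrib, ← mul_sum, sum_boole, sum_const, card_univ, Fintype.card_fin,
    hammingNorm]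
  simp

lemma sum_zsign_eq_zero_of_add {V : Type*} [AddGroup V] [Fintype V] (f : V → ZMod 2) (v₀ : V)
    (hf : ∀ v, f (v + v₀) = f v + 1) : ∑ v, (zsign (f v) : ℤ) = 0 := by
  have : ∑ v, (zsign (f v) : ℤ) = ∑ v, -(zsign (f v) : ℤ) := by
    conv_lhs => rw [← Equiv.sum_comp (Equiv.addRight v₀)]
    simp [hf, zsign_add]
  rw [sum_neg_distrib] at this
  linarith

section SignSequences

lemma exists_card_eq_two_mul_of_sum_units_eq_zero {ι : Type*} (s : Finset ι) (f : ι → ℤˣ)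
    (h : ∑ i ∈ s, (f i : ℤ) = 0) :
    ∃ k, #s = 2 * k ∧ ∏ i ∈ s, f i = (-1) ^ k := by
  classical
  have hneg : ∀ i ∈ s.filter (f · = -1), f i = -1 := fun i hi => (mem_filter.mp hi).2
  have hpos : ∀ i ∈ s.filter (¬f · = -1), f i = 1 := fun i hi =>
    (Int.units_eq_one_or _).resolve_right (mem_filter.mp hi).2
  have hsum := sum_filter_add_sum_filter_not s (f · = -1) (fun i => (f i : ℤ))
  rw [sum_congr rfl fun i hi => congrArg Units.val (hneg i hi),
    sum_congr rfl fun i hi => congrArg Units.val (hpos i hi), h] at hsum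
  have hcard := card_filter_add_card_filter_not (s := s) (f · = -1)
  simp only [sum_const, Units.val_neg, Units.val_one, nsmul_eq_mul, mul_neg, mul_one] at hsum
  refine ⟨#(s.filter (f · = -1)), by omega, ?_⟩
  rw [← prod_filter_mul_prod_filter_not s (f · = -1), prod_congr rfl hneg,
    prod_congr rfl hpos, prod_const, prod_const_one, mul_one]

lemma sum_range_two_mul_of_periodic {M : Type*} [AddCommMonoid M] (f : ℕ → M) (T : ℕ)
    (hf : ∀ i, f (i + T) = f i) : ∑ i ∈ range (2 * T), f i = 2 • ∑ i ∈ range T, f i := by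
  rw [two_mul, sum_range_add, two_nsmul]
  simp only [add_comm T, hf]

lemma sum_range_two_mul_eq_sum_even_add_odd {M : Type*} [AddCommMonoid M] (f : ℕ → M)
    (m : ℕ) : ∑ i ∈ range (2 * m), f i = ∑ i ∈ range m, (f (2 * i) + f (2 * i + 1)) := by
  induction m with
  | zero => simp
  | succ m ih => rw [mul_add, mul_one, sum_range_succ, sum_range_succ, sum_range_succ, ih,
      add_assoc]

/-- Vanishing of the first sum makes `T = 2k` with `(-1)^k = ∏ X_i X_{i+1} = X_0 X_T = -1`,
of the second `(-1)^k = ∏ X_i X_{i+2} = X_0 X_1 X_T X_{T+1} = 1`. -/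
theorem false_of_negaperiodic {X : ℕ → ℤˣ} {T : ℕ} (hX : ∀ i, X (i + T) = -X i)
    (h₁ : ∑ i ∈ range T, (X i : ℤ) * X (i + 1) = 0)
    (h₂ : ∑ i ∈ range T, (X i : ℤ) * X (i + 2) = 0) : False := by
  obtain ⟨k₁, hT₁, hp₁⟩ := exists_card_eq_two_mul_of_sum_units_eq_zero _
    (fun i => X i * X (i + 1)) (by push_cast; exact h₁)
  obtain ⟨k₂, hT₂, hp₂⟩ := exists_card_eq_two_mul_of_sum_units_eq_zero _
    (fun i => X i * X (i + 2)) (by push_cast; exact h₂)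
  have hk : k₁ = k₂ := by rw [card_range] at hT₁ hT₂; omega
  have tele₁ : ∏ i ∈ range T, X i * X (i + 1) = X T * X 0 := by
    rw [← Int.units_div_eq_mul, ← prod_range_div]
    simp only [Int.units_div_eq_mul, mul_comm]
  have tele₂ : ∏ i ∈ range T, X i * X (i + 2) = X T * X (T + 1) * (X 0 * X 1) := by
    rw [← Int.units_div_eq_mul, ← prod_range_div (fun i => X i * X (i + 1))]
    refine prod_congr rfl fun i _ => ?_
    rw [Int.units_div_eq_mul]
    calc X i * X (i + 2) = X i * X (i + 2) * (X (i + 1) * X (i + 1)) := by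
          rw [Int.units_mul_self, mul_one]
      _ = _ := by ac_rfl
  have hT₁ : X T = -X 0 := by simpa using hX 0
  have hT₂ : X (T + 1) = -X 1 := by simpa [add_comm] using hX 1
  rw [tele₁, hT₁, neg_mul, Int.units_mul_self] at hp₁
  rw [tele₂, hT₁, hT₂, neg_mul_neg, Int.units_mul_self, ← hk, ← hp₁] at hp₂
  exact absurd hp₂ (by decide)

end SignSequences

/-- `G` is the internal direct product `⟨a⟩ × ⟨b⟩ ≅ C_{4t} × C_2`. -/
structure IsCyclicProdC2 {G : Type*} [Monoid G] (t : ℕ) (a b : G) : Prop where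
  orderOf_eq : orderOf a = 4 * t
  sq_eq_one : b ^ 2 = 1
  ne_pow : ∀ i : ℕ, b ≠ a ^ i
  exists_eq : ∀ g, ∃ i j : ℕ, g = a ^ i * b ^ j

namespace IsCyclicProdC2

variable {G : Type*} [CommGroup G] {t : ℕ} {a b : G}

lemma mul_self_eq_one (hab : IsCyclicProdC2 t a b) : b * b = 1 := by
  rw [← sq, hab.sq_eq_one]

lemma pow_eq_pow_mod_two (hab : IsCyclicProdC2 t a b) (j : ℕ) : b ^ j = b ^ (j % 2) := by
  conv_lhs => rw [← Nat.mod_add_div j 2, pow_add, pow_mul, hab.sq_eq_one, one_pow, mul_one]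

lemma pow_mod (hab : IsCyclicProdC2 t a b) (m : ℕ) : a ^ (m % (4 * t)) = a ^ m := by
  rw [← hab.orderOf_eq, pow_mod_orderOf]

lemma pow_inj (hab : IsCyclicProdC2 t a b) {i j : ℕ} (hi : i < 4 * t) (hj : j < 4 * t) :
    a ^ i = a ^ j ↔ i = j := by
  rw [pow_eq_pow_iff_modEq, hab.orderOf_eq, Nat.ModEq, Nat.mod_eq_of_lt hi, Nat.mod_eq_of_lt hj]

lemma pow_mul_ne_pow [Finite G] (hab : IsCyclicProdC2 t a b) (i j : ℕ) : a ^ i * b ≠ a ^ j := by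
  intro h
  have hpos : 0 < 4 * t := hab.orderOf_eq ▸ orderOf_pos a
  have hinv : a ^ i * a ^ (i * (4 * t - 1)) = 1 := by
    rw [← pow_add, add_comm, ← Nat.mul_succ, Nat.succ_eq_add_one, Nat.sub_add_cancel hpos,
      pow_mul', ← hab.orderOf_eq, pow_orderOf_eq_one, one_pow]
  refine hab.ne_pow (j + i * (4 * t - 1)) ?_
  rw [pow_add, ← h, mul_right_comm, hinv, one_mul]

lemma exists_eq_pow_or (hab : IsCyclicProdC2 t a b) (g : G) :
    ∃ m, g = a ^ m ∨ g = a ^ m * b := by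
  obtain ⟨m, j, rfl⟩ := hab.exists_eq g
  rw [hab.pow_eq_pow_mod_two]
  rcases Nat.mod_two_eq_zero_or_one j with h | h <;> rw [h]
  · exact ⟨m, Or.inl (by rw [pow_zero, mul_one])⟩
  · exact ⟨m, Or.inr (by rw [pow_one])⟩

lemma sum_eq [Fintype G] {M : Type*} [AddCommMonoid M] (hab : IsCyclicProdC2 t a b)
    (f : G → M) : ∑ g, f g = ∑ i ∈ range (4 * t), (f (a ^ i) + f (a ^ i * b)) := by
  classical
  have hpos : 0 < 4 * t := hab.orderOf_eq ▸ orderOf_pos a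
  have hinj : Set.InjOn (a ^ ·) (range (4 * t)) := fun i hi j hj =>
    (hab.pow_inj (mem_range.1 hi) (mem_range.1 hj)).1
  have huniv : univ = (range (4 * t)).image (a ^ ·) ∪ (range (4 * t)).image (a ^ · * b) := by
    ext g
    simp only [mem_univ, true_iff, mem_union, mem_image, mem_range]
    obtain ⟨m, rfl | rfl⟩ := hab.exists_eq_pow_or g
    · exact Or.inl ⟨m % (4 * t), Nat.mod_lt _ hpos, hab.pow_mod m⟩
    · exact Or.inr ⟨m % (4 * t), Nat.mod_lt _ hpos, by rw [hab.pow_mod m]⟩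
  rw [huniv, sum_union, sum_image hinj,
    sum_image fun i hi j hj h => hinj hi hj (mul_right_cancel h), sum_add_distrib]
  simp only [disjoint_left, mem_image]
  rintro _ ⟨i, -, rfl⟩ ⟨j, -, h⟩
  exact hab.pow_mul_ne_pow j i h

lemma monoidHom_ext {M : Type*} [Monoid M] (hab : IsCyclicProdC2 t a b) {χ χ' : G →* M}
    (ha : χ a = χ' a) (hb : χ b = χ' b) : χ = χ' :=
  MonoidHom.ext fun g => by
    obtain ⟨i, j, rfl⟩ := hab.exists_eq g
    simp only [map_mul, map_pow, ha, hb]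

lemma pow_eq_one_or_eq_of_mul_self (hab : IsCyclicProdC2 t a b) {m : ℕ}
    (h : a ^ m * a ^ m = 1) : a ^ m = 1 ∨ a ^ m = a ^ (2 * t) := by
  rw [← pow_add, ← two_mul] at h
  obtain ⟨k, hk⟩ := hab.orderOf_eq ▸ orderOf_dvd_of_pow_eq_one h
  have hm : m = 2 * t * k := by linarith
  have hu : a ^ (4 * t) = 1 := hab.orderOf_eq ▸ pow_orderOf_eq_one a
  rcases Nat.even_or_odd k with ⟨r, rfl⟩ | ⟨r, rfl⟩
  · left
    rw [hm, show 2 * t * (r + r) = 4 * t * r by ring, pow_mul, hu, one_pow]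
  · right
    rw [hm, show 2 * t * (2 * r + 1) = 4 * t * r + 2 * t by ring, pow_add, pow_mul, hu, one_pow,
      one_mul]

lemma odd_of_pow_mul_self_eq (hab : IsCyclicProdC2 t a b) {m : ℕ} (hm : Odd m)
    (h : a ^ m * a ^ m = a ^ (2 * t)) : Odd t := by
  rw [← pow_add, pow_eq_pow_iff_modEq, hab.orderOf_eq, Nat.modEq_iff_dvd] at h
  obtain ⟨k, hk⟩ := h
  obtain ⟨r, rfl⟩ := hm
  refine Int.odd_coe_nat t |>.mp ⟨r + t * k, ?_⟩
  push_cast at hk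
  linarith

lemma mul_right [Finite G] (hab : IsCyclicProdC2 t a b) : IsCyclicProdC2 t (a * b) b := by
  have hpow : ∀ i, (a * b) ^ i = a ^ i * b ^ (i % 2) := fun i => by
    rw [mul_pow, hab.pow_eq_pow_mod_two]
  have hpos : 0 < 4 * t := hab.orderOf_eq ▸ orderOf_pos a
  refine ⟨?_, hab.sq_eq_one, fun i h => ?_, fun g => ?_⟩
  · rw [orderOf_eq_iff hpos]
    refine ⟨by rw [hpow, show 4 * t % 2 = 0 by omega, pow_zero, mul_one, ← hab.orderOf_eq,
      pow_orderOf_eq_one], fun m hm hm0 h => ?_⟩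
    rw [hpow] at h
    rcases Nat.mod_two_eq_zero_or_one m with h2 | h2 <;> rw [h2] at h
    · rw [pow_zero, mul_one] at h
      exact pow_ne_one_of_lt_orderOf hm0.ne' (hab.orderOf_eq ▸ hm) h
    · rw [pow_one] at h
      exact hab.pow_mul_ne_pow m 0 (by rw [h, pow_zero])
  · rw [hpow] at h
    rcases Nat.mod_two_eq_zero_or_one i with h2 | h2 <;> rw [h2] at h
    · exact hab.ne_pow i (by rw [h, pow_zero, mul_one])
    · rw [pow_one, right_eq_mul] at h
      have h4 : 2 ∣ 4 * t := ⟨2 * t, by ring⟩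
      have := h4.trans (hab.orderOf_eq ▸ orderOf_dvd_of_pow_eq_one h)
      omega
  · obtain ⟨i, j, rfl⟩ := hab.exists_eq g
    refine ⟨i, j + i, ?_⟩
    rw [mul_pow, mul_assoc, ← pow_add, show i + (j + i) = j + 2 * i by ring, pow_add, pow_mul,
      hab.sq_eq_one, one_pow, mul_one]

lemma sum_one_add_mul_eq_of_apply_b_eq_one [Fintype G] (hab : IsCyclicProdC2 t a b)
    {χ : G →* ℤˣ} (ha : χ a = -1) (hb : χ b = 1) (F : G → ℤ) (hF : ∀ g, F (g * b) = F g) :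
    ∑ g, (1 + (χ g : ℤ)) * F g = 4 * ∑ i ∈ range (2 * t), F (a ^ (2 * i)) := by
  rw [hab.sum_eq, show 4 * t = 2 * (2 * t) by ring, sum_range_two_mul_eq_sum_even_add_odd,
    mul_sum]
  refine sum_congr rfl fun i _ => ?_
  simp only [hF, map_mul, map_pow, ha, hb, mul_one, pow_succ, pow_mul]
  push_cast
  ring

end IsCyclicProdC2

section NegaPerfect

def IsTwistedPeriod {G : Type*} [MulOneClass G] (ψ : G → ℤˣ) (χ : G →* ℤˣ) (z : G) : Prop :=
  ∀ g, ψ (g * z) = χ g * ψ g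

structure IsNegaPerfect {G : Type*} [Group G] [Fintype G] (u : G) (ψ : G → ℤˣ) : Prop where
  apply_mul_eq_neg : ∀ g, ψ (u * g) = -ψ g
  sum_mul_eq_zero : ∀ w, w ≠ 1 → w ≠ u → ∑ g, (ψ g : ℤ) * ψ (g * w) = 0

variable {G : Type*} [CommGroup G] {ψ : G → ℤˣ} {χ : G →* ℤˣ} {z : G}

namespace IsTwistedPeriod

lemma apply_mul_mul_self (hz : IsTwistedPeriod ψ χ z) (g : G) :
    ψ (g * (z * z)) = χ z * ψ g := by
  rw [← mul_assoc, hz, hz, map_mul]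
  calc χ g * χ z * (χ g * ψ g) = (χ g * χ g) * χ z * ψ g := by ac_rfl
    _ = χ z * ψ g := by rw [Int.units_mul_self, one_mul]

lemma apply_eq_one_of_mul_self_eq_one (hz : IsTwistedPeriod ψ χ z) (h : z * z = 1) :
    χ z = 1 := by
  simpa [h] using (hz.apply_mul_mul_self 1).symm

lemma ne_one (hz : IsTwistedPeriod ψ χ z) (hχ : χ ≠ 1) : z ≠ 1 := by
  rintro rfl
  exact hχ (MonoidHom.ext fun g => by simpa using (hz g).symm)

end IsTwistedPeriod

namespace IsNegaPerfect

variable [Fintype G] {u : G}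

lemma ne_of_twistedPeriod (hψ : IsNegaPerfect u ψ) (hz : IsTwistedPeriod ψ χ z) : z ≠ u := by
  rintro rfl
  have := hz 1
  rw [mul_comm, hψ.apply_mul_eq_neg, map_one, one_mul] at this
  exact neg_units_ne_self _ this

lemma mul_self_eq_one_or (hψ : IsNegaPerfect u ψ) (hz : IsTwistedPeriod ψ χ z) :
    z * z = 1 ∨ z * z = u := by
  by_contra! h
  have hsum := hψ.sum_mul_eq_zero _ h.1 h.2
  have hterm : ∀ g, (ψ g : ℤ) * ψ (g * (z * z)) = χ z := fun g => by
    rw [hz.apply_mul_mul_self, mul_comm (χ z), ← Units.val_mul, ← mul_assoc, Int.units_mul_self,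
      one_mul]
  simp only [hterm, sum_const, card_univ, nsmul_eq_mul] at hsum
  rcases Int.units_eq_one_or (χ z) with h' | h' <;> rw [h'] at hsum <;>
    simp [Fintype.card_ne_zero] at hsum

lemma apply_eq_neg_one_of_mul_self_eq (hψ : IsNegaPerfect u ψ) (hz : IsTwistedPeriod ψ χ z)
    (h : z * z = u) : χ z = -1 := by
  have := hz.apply_mul_mul_self 1
  rw [h, mul_comm, hψ.apply_mul_eq_neg] at this
  exact mul_right_cancel (this.symm.trans (neg_one_mul _).symm)

lemma mul_self_eq_one_iff (hψ : IsNegaPerfect u ψ) (hz : IsTwistedPeriod ψ χ z) :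
    z * z = 1 ↔ χ z = 1 := by
  refine ⟨hz.apply_eq_one_of_mul_self_eq_one, fun h => ?_⟩
  refine (hψ.mul_self_eq_one_or hz).resolve_right fun hu => ?_
  rw [hψ.apply_eq_neg_one_of_mul_self_eq hz hu] at h
  exact absurd h (by decide)

/-- The autocorrelation at `d * z` is the `χ`-weighted autocorrelation at `d`. -/
lemma sum_one_add_mul_eq_zero (hψ : IsNegaPerfect u ψ) (hz : IsTwistedPeriod ψ χ z) {d : G}
    (hd₁ : d ≠ 1) (hdu : d ≠ u) (hdz₁ : d * z ≠ 1) (hdzu : d * z ≠ u) :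
    ∑ g, (1 + (χ g : ℤ)) * (ψ g * ψ (g * d)) = 0 := by
  have h₁ := hψ.sum_mul_eq_zero d hd₁ hdu
  have h₂ := hψ.sum_mul_eq_zero (d * z) hdz₁ hdzu
  simp only [← mul_assoc _ d z, hz (_ * d), map_mul, Units.val_mul] at h₂
  have h₃ : (χ d : ℤ) * ∑ g, (χ g : ℤ) * (ψ g * ψ (g * d)) = 0 := by
    rw [← h₂, mul_sum]; exact sum_congr rfl fun g _ => by ring
  simp only [mul_eq_zero, Units.ne_zero, false_or] at h₃
  simp only [add_mul, one_mul, sum_add_distrib, h₁, h₃, add_zero]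

lemma false_of_pow_eq (hψ : IsNegaPerfect u ψ) {c : G} {T : ℕ} (hc : c ^ T = u)
    (h₁ : ∑ i ∈ range (2 * T), (ψ (c ^ i) : ℤ) * ψ (c ^ (i + 1)) = 0)
    (h₂ : ∑ i ∈ range (2 * T), (ψ (c ^ i) : ℤ) * ψ (c ^ (i + 2)) = 0) : False := by
  have hX : ∀ i, ψ (c ^ (i + T)) = -ψ (c ^ i) := fun i => by
    rw [pow_add, hc, mul_comm, hψ.apply_mul_eq_neg]
  have half : ∀ k, ∑ i ∈ range (2 * T), (ψ (c ^ i) : ℤ) * ψ (c ^ (i + k)) =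
      2 * ∑ i ∈ range T, (ψ (c ^ i) : ℤ) * ψ (c ^ (i + k)) := fun k => by
    rw [sum_range_two_mul_of_periodic _ T fun i => ?_, two_nsmul, two_mul]
    rw [hX, add_right_comm, hX]; push_cast; ring
  rw [half] at h₁ h₂
  exact false_of_negaperiodic (X := fun i => ψ (c ^ i)) hX (by linarith) (by linarith)

variable {t : ℕ} {a b : G}

lemma ne_pow_of_mul_self_eq_one (hψ : IsNegaPerfect (a ^ (2 * t)) ψ)
    (hab : IsCyclicProdC2 t a b) (hχ : χ ≠ 1) (hz : IsTwistedPeriod ψ χ z) (h : z * z = 1)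
    (m : ℕ) : z ≠ a ^ m := by
  rintro rfl
  rcases hab.pow_eq_one_or_eq_of_mul_self h with h | h
  · exact hz.ne_one hχ h
  · exact hψ.ne_of_twistedPeriod hz h

lemma false_of_apply_a_eq_one (hψ : IsNegaPerfect (a ^ (2 * t)) ψ)
    (hab : IsCyclicProdC2 t a b) (ht : 2 ≤ t) (hz : IsTwistedPeriod ψ χ z) (ha : χ a = 1)
    (hb : χ b = -1) : False := by
  have hχ : χ ≠ 1 := fun h => by
    rw [h, MonoidHom.one_apply] at hb; exact absurd hb (by decide)
  obtain ⟨m, hm | rfl⟩ := hab.exists_eq_pow_or z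
  · exact hψ.ne_pow_of_mul_self_eq_one hab hχ hz
      ((hψ.mul_self_eq_one_iff hz).2 (by rw [hm, map_pow, ha, one_pow])) m hm
  have hsum : ∀ k, 0 < k → k < 2 * t →
      ∑ i ∈ range (2 * (2 * t)), (ψ (a ^ i) : ℤ) * ψ (a ^ (i + k)) = 0 := by
    intro k hk₀ hk
    have hdz : ∀ j, a ^ k * (a ^ m * b) ≠ a ^ j := fun j => by
      rw [← mul_assoc, ← pow_add]; exact hab.pow_mul_ne_pow _ j
    have h := hψ.sum_one_add_mul_eq_zero hz
      (pow_ne_one_of_lt_orderOf hk₀.ne' (by rw [hab.orderOf_eq]; omega))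
      (fun h => by have := (hab.pow_inj (by omega) (by omega)).1 h; omega)
      (pow_zero a ▸ hdz 0) (hdz _)
    rw [hab.sum_eq] at h
    simp only [map_mul, map_pow, ha, hb, one_pow, one_mul, Units.val_one, Units.val_neg,
      ← pow_add] at h
    rw [show 2 * (2 * t) = 4 * t by ring]
    have h₂ : 2 * ∑ i ∈ range (4 * t), (ψ (a ^ i) : ℤ) * ψ (a ^ (i + k)) = 0 := by
      rw [← h, mul_sum]; exact sum_congr rfl fun i _ => by ring
    simpa using h₂
  exact hψ.false_of_pow_eq rfl (hsum 1 (by omega) (by omega)) (hsum 2 (by omega) (by omega))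

lemma false_of_apply_b_eq_one_of_mul_self_eq_one (hψ : IsNegaPerfect (a ^ (2 * t)) ψ)
    (hab : IsCyclicProdC2 t a b) (ht : 3 ≤ t) (hz : IsTwistedPeriod ψ χ z) (ha : χ a = -1)
    (hb : χ b = 1) (hzz : z * z = 1) : False := by
  have hχ : χ ≠ 1 := fun h => by
    rw [h, MonoidHom.one_apply] at ha; exact absurd ha (by decide)
  obtain ⟨m, hm | rfl⟩ := hab.exists_eq_pow_or z
  · exact hψ.ne_pow_of_mul_self_eq_one hab hχ hz hzz m hm
  have hm : a ^ m * a ^ m = 1 := by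
    rw [← hzz, mul_mul_mul_comm, hab.mul_self_eq_one, mul_one]
  -- `z ∈ {b, u * b}`, so `b` is a twisted period of `ψ` up to a global sign
  obtain ⟨s, hs⟩ : ∃ s : ℤˣ, ∀ g, ψ (g * b) = s * (χ g * ψ g) := by
    rcases hab.pow_eq_one_or_eq_of_mul_self hm with h | h
    · exact ⟨1, fun g => by rw [one_mul, ← hz g, h, one_mul]⟩
    · refine ⟨-1, fun g => ?_⟩
      rw [← hz g, h, mul_left_comm, hψ.apply_mul_eq_neg, neg_one_mul, neg_neg]
  have hsum : ∀ l, 0 < l → l < t →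
      ∑ i ∈ range (2 * t), (ψ ((a ^ 2) ^ i) : ℤ) * ψ ((a ^ 2) ^ (i + l)) = 0 := by
    intro l hl₀ hl
    have hdz : ∀ j, a ^ (2 * l) * (a ^ m * b) ≠ a ^ j := fun j => by
      rw [← mul_assoc, ← pow_add]; exact hab.pow_mul_ne_pow _ j
    have h := hψ.sum_one_add_mul_eq_zero hz
      (pow_ne_one_of_lt_orderOf (by omega) (by rw [hab.orderOf_eq]; omega))
      (fun h => by have := (hab.pow_inj (by omega) (by omega)).1 h; omega)
      (pow_zero a ▸ hdz 0) (hdz _)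
    rw [hab.sum_one_add_mul_eq_of_apply_b_eq_one ha hb _ fun g => ?_] at h
    · simpa [← pow_mul, pow_add] using h
    rw [mul_right_comm, hs, hs]
    simp only [← Units.val_mul, map_mul, map_pow, ha, (even_two_mul l).neg_one_pow, mul_one]
    congr 1
    calc _ = (s * s) * (χ g * χ g) * (ψ g * ψ (g * a ^ (2 * l))) := by ac_rfl
      _ = _ := by rw [Int.units_mul_self, Int.units_mul_self, one_mul, one_mul]
  exact hψ.false_of_pow_eq (by rw [← pow_mul]) (hsum 1 (by omega) (by omega))
    (hsum 2 (by omega) (by omega))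

lemma false_of_apply_b_eq_one_of_mul_self_eq (hψ : IsNegaPerfect (a ^ (2 * t)) ψ)
    (hab : IsCyclicProdC2 t a b) (hz : IsTwistedPeriod ψ χ z) (ha : χ a = -1)
    (hb : χ b = 1) (hzz : z * z = a ^ (2 * t)) : False := by
  have hχz := hψ.apply_eq_neg_one_of_mul_self_eq hz hzz
  have hodd : Odd t := by
    obtain ⟨m, hm⟩ := hab.exists_eq_pow_or z
    have hχm : χ a ^ m = -1 := by
      rcases hm with rfl | rfl <;> simpa [hb] using hχz
    have hmo : Odd m := by
      rw [ha] at hχm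
      refine (Nat.even_or_odd m).resolve_left fun he => ?_
      rw [he.neg_one_pow] at hχm
      exact absurd hχm (by decide)
    refine hab.odd_of_pow_mul_self_eq hmo ?_
    rcases hm with rfl | rfl
    · exact hzz
    · rw [← hzz, mul_mul_mul_comm, hab.mul_self_eq_one, mul_one]
  have hu : χ (a ^ (2 * t)) = 1 := by rw [map_pow, ha, (even_two_mul t).neg_one_pow]
  have hbz : ∀ w, χ w = 1 → b * z ≠ w := fun w hw h => by
    rw [← h, map_mul, hb, hχz, one_mul] at hw
    exact absurd hw (by decide)
  have h := hψ.sum_one_add_mul_eq_zero hz (pow_zero a ▸ hab.ne_pow 0) (hab.ne_pow _)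
    (hbz 1 (map_one χ)) (hbz _ hu)
  rw [hab.sum_one_add_mul_eq_of_apply_b_eq_one ha hb _ fun g => by
    rw [mul_assoc, hab.mul_self_eq_one, mul_one, mul_comm]] at h
  -- multiplication by `u = a ^ (2 * t)` negates both factors of the summand
  rw [sum_range_two_mul_of_periodic _ t fun i => by
    rw [mul_add, pow_add, mul_comm (a ^ _), hψ.apply_mul_eq_neg, mul_assoc,
      hψ.apply_mul_eq_neg]
    push_cast
    ring] at h
  obtain ⟨k, hk, -⟩ := exists_card_eq_two_mul_of_sum_units_eq_zero (range t)
    (fun i => ψ (a ^ (2 * i)) * ψ (a ^ (2 * i) * b)) (by rw [two_nsmul] at h; push_cast; linarith)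
  rw [card_range] at hk
  exact Nat.not_even_iff_odd.2 hodd ⟨k, by omega⟩

theorem le_two (hψ : IsNegaPerfect (a ^ (2 * t)) ψ) (hab : IsCyclicProdC2 t a b) (hχ : χ ≠ 1)
    (hz : IsTwistedPeriod ψ χ z) : t ≤ 2 := by
  by_contra! ht
  rcases Int.units_eq_one_or (χ a) with ha | ha <;> rcases Int.units_eq_one_or (χ b) with hb | hb
  · exact hχ (hab.monoidHom_ext (by simpa using ha) (by simpa using hb))
  · exact hψ.false_of_apply_a_eq_one hab (by omega) hz ha hb
  · rcases hψ.mul_self_eq_one_or hz with hzz | hzz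
    · exact hψ.false_of_apply_b_eq_one_of_mul_self_eq_one hab ht hz ha hb hzz
    · exact hψ.false_of_apply_b_eq_one_of_mul_self_eq hab hz ha hb hzz
  · have hu : (a * b) ^ (2 * t) = a ^ (2 * t) := by
      rw [mul_pow, pow_mul b, hab.sq_eq_one, one_pow, mul_one]
    exact (hu ▸ hψ).false_of_apply_a_eq_one hab.mul_right (by omega) hz
      (by rw [map_mul, ha, hb]; rfl) hb

end IsNegaPerfect

end NegaPerfect

theorem exists_smul_sub_mem_of_index_eq_prime_pow {p : ℕ} [Fact p.Prime] {G V : Type*} [Group G]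
    [AddCommGroup V] [Finite V] [DistribMulAction G V] (U : AddSubgroup V)
    (hU : ∀ g : G, ∀ v ∈ U, g • v ∈ U) (N : Subgroup G) (hN : ∀ g ∈ N, ∀ v : V, g • v = v)
    {k : ℕ} (hNk : N.index = p ^ k) (hp : p ∣ U.index) : ∃ v ∉ U, ∀ g : G, g • v - v ∈ U := by
  let _ : MulAction G (V ⧸ U) :=
    { smul := fun g => QuotientAddGroup.map U U (DistribSMul.toAddMonoidHom V g) (hU g)
      one_smul := fun q => QuotientAddGroup.induction_on q fun v =>
        congrArg QuotientAddGroup.mk (one_smul G v)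
      mul_smul := fun g h q => QuotientAddGroup.induction_on q fun v =>
        congrArg QuotientAddGroup.mk (mul_smul g h v) }
  have hmk : ∀ (g : G) (v : V), g • (v : V ⧸ U) = ((g • v : V) : V ⧸ U) := fun _ _ => rfl
  -- the image of `G` in `Perm (V ⧸ U)` is a quotient of `G ⧸ N`, hence a `p`-group
  let ρ := MulAction.toPermHom G (V ⧸ U)
  have hP : IsPGroup p ρ.range := by
    have hle : N ≤ ρ.ker := fun g hg => by
      ext q
      induction q using QuotientAddGroup.induction_on
      simp [ρ, hmk, hN g hg]
    obtain ⟨m, -, hm⟩ := (Nat.dvd_prime_pow Fact.out).1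
      (Subgroup.index_ker ρ ▸ hNk ▸ Subgroup.index_dvd_of_le hle)
    exact IsPGroup.of_card hm
  obtain ⟨q, hq, hq0⟩ := hP.exists_fixed_point_of_prime_dvd_card_of_fixed_point (V ⧸ U) hp
    (a := 0) fun ⟨_, g, rfl⟩ => (hmk g 0).trans (congrArg _ (smul_zero g))
  obtain ⟨v, rfl⟩ := QuotientAddGroup.mk_surjective q
  refine ⟨v, fun hv => hq0 ((QuotientAddGroup.eq_zero_iff v).2 hv).symm, fun g => ?_⟩
  have := hq ⟨ρ g, g, rfl⟩
  rw [Subgroup.smul_def] at this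
  simp only [ρ, MulAction.toPermHom_apply] at this
  exact (QuotientAddGroup.eq_iff_sub_mem).1 this

section PermAct

variable {n : ℕ}

@[simp] lemma permAct_apply (σ : Equiv.Perm (Fin n)) (x : Vec n) (i : Fin n) :
    permAct σ x i = x (σ⁻¹ i) := rfl

lemma permAct_mul (σ τ : Equiv.Perm (Fin n)) (x : Vec n) :
    permAct (σ * τ) x = permAct σ (permAct τ x) := by
  ext i; simp [mul_inv_rev]

lemma permAct_injective (σ : Equiv.Perm (Fin n)) : Function.Injective (permAct σ) :=
  fun x y h => funext fun i => by simpa using congrFun h (σ i)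

end PermAct

namespace HFPCode

variable {n : ℕ} (H : HFPCode n)

abbrev Elem : Type := H.C

instance : One H.Elem := ⟨⟨0, H.zero_mem⟩⟩

instance : Mul H.Elem := ⟨fun x y => ⟨H.mul x y, H.mul_mem _ x.2 _ y.2⟩⟩

variable {H}

@[simp] lemma val_one : ((1 : H.Elem) : Vec n) = 0 := rfl

lemma val_mul (x y : H.Elem) : ((x * y : H.Elem) : Vec n) = H.mul x y := rfl

lemma mul_right_injective (x : H.Elem) : Function.Injective (x * ·) := fun _ _ h =>
  Subtype.ext <| permAct_injective _ <| add_left_cancel (congrArg Subtype.val h)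

variable (H)

noncomputable instance : Inv H.Elem :=
  ⟨fun x => (Finite.injective_iff_surjective.1 (mul_right_injective x) 1).choose⟩

noncomputable instance : Group H.Elem := Group.ofRightAxioms
  (fun x y z => Subtype.ext <| by
    simp only [val_mul, HFPCode.mul, H.π_mul _ x.2 _ y.2, permAct_mul, add_assoc]; rfl)
  (fun x => Subtype.ext (add_zero x.1))
  (fun x => (Finite.injective_iff_surjective.1 (mul_right_injective x) 1).choose_spec)

noncomputable instance : Fintype H.Elem := Fintype.ofFinite _

noncomputable def perm : H.Elem →* Equiv.Perm (Fin n) where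
  toFun x := H.π x
  map_one' := H.π_zero
  map_mul' x y := H.π_mul _ x.2 _ y.2

noncomputable instance : MulAction H.Elem (Fin n) := MulAction.compHom _ H.perm

noncomputable instance : DistribMulAction H.Elem (Vec n) where
  smul g x := permAct (H.π g) x
  one_smul x := by show permAct (H.π 0) x = x; rw [H.π_zero]; rfl
  mul_smul g h x := by
    show permAct (H.π (g + permAct (H.π g) h)) x = _
    rw [H.π_mul _ g.2 _ h.2, permAct_mul]; rfl
  smul_zero _ := rfl
  smul_add _ _ _ := rfl

def u : H.Elem := ⟨allOne n, H.allOne_mem⟩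

variable {H}

lemma pos (H : HFPCode n) : 0 < n := by
  have := (Set.ncard_pos (Set.toFinite H.C)).2 ⟨0, H.zero_mem⟩
  rw [H.card_eq] at this
  omega

lemma card_elem : Fintype.card H.Elem = 2 * n := by
  rw [Fintype.card_eq_nat_card, Nat.card_coe_set_eq, H.card_eq]

lemma val_mul_eq_add_smul (x y : H.Elem) : ((x * y : H.Elem) : Vec n) = x + x • (y : Vec n) :=
  rfl

lemma smul_vec_apply (g : H.Elem) (x : Vec n) (i : Fin n) : (g • x) i = x (g⁻¹ • i) := by
  show x ((H.π g)⁻¹ i) = x (H.perm g⁻¹ i)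
  rw [map_inv]; rfl

lemma smul_const (g : H.Elem) (c : ZMod 2) : g • (fun _ => c : Vec n) = fun _ => c := rfl

lemma val_u_mul (g : H.Elem) : ((H.u * g : H.Elem) : Vec n) = allOne n + g := by
  show allOne n + permAct (H.π (allOne n)) g = _
  rw [H.π_allOne]; rfl

lemma u_mul_comm (g : H.Elem) : H.u * g = g * H.u :=
  Subtype.ext <| by rw [val_u_mul, val_mul_eq_add_smul, add_comm]; rfl

lemma smul_u_mul (g : H.Elem) (i : Fin n) : (H.u * g) • i = g • i := by
  rw [mul_smul]; show H.π (allOne n) _ = _; rw [H.π_allOne]; rfl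

lemma allOne_ne_zero (H : HFPCode n) : allOne n ≠ 0 := fun h => by
  simpa [allOne] using congrFun h ⟨0, H.pos⟩

lemma u_ne_one : H.u ≠ 1 := fun h => H.allOne_ne_zero (congrArg Subtype.val h)

lemma eq_one_or_eq_u_of_smul_eq {g : H.Elem} {i : Fin n} (h : g • i = i) : g = 1 ∨ g = H.u := by
  by_contra! hg
  exact H.π_fixedfree _ g.2 (fun h0 => hg.1 (Subtype.ext h0)) (fun hu => hg.2 (Subtype.ext hu)) i h

/-- The action on coordinates is transitive with point stabilisers `{1, u}`. -/
lemma sum_smul {M : Type*} [AddCommMonoid M] (i₀ : Fin n) (f : Fin n → M) :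
    ∑ g : H.Elem, f (g • i₀) = 2 • ∑ i, f i := by
  classical
  have hfib : ∀ g : H.Elem, #{h : H.Elem | h • i₀ = g • i₀} = 2 := fun g => by
    have : ({h : H.Elem | h • i₀ = g • i₀} : Finset H.Elem) = {g, H.u * g} := by
      ext h
      simp only [mem_filter, mem_univ, true_and, mem_insert, mem_singleton]
      refine ⟨fun hh => ?_, ?_⟩
      · rcases eq_one_or_eq_u_of_smul_eq (g := g⁻¹ * h) (i := i₀)
          (by rw [mul_smul, hh, inv_smul_smul]) with h1 | h1
        · exact Or.inl (inv_mul_eq_one.1 h1).symm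
        · exact Or.inr (by rw [u_mul_comm, ← h1, mul_inv_cancel_left])
      · rintro (rfl | rfl)
        · rfl
        · exact smul_u_mul g i₀
    rw [this, card_pair]
    exact fun h => u_ne_one (mul_eq_right.1 h.symm)
  have hfib' : ∀ j ∈ univ.image (fun g : H.Elem => g • i₀), #{h : H.Elem | h • i₀ = j} = 2 := by
    rintro _ hj
    obtain ⟨g, -, rfl⟩ := mem_image.1 hj
    exact hfib g
  have himg : univ.image (fun g : H.Elem => g • i₀) = univ := by
    refine eq_univ_of_card _ ?_
    have := card_eq_sum_card_image (fun g : H.Elem => g • i₀) univ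
    rw [card_univ, card_elem, sum_congr rfl hfib', sum_const, smul_eq_mul] at this
    rw [Fintype.card_fin]; omega
  rw [sum_comp, smul_sum]
  refine (sum_congr rfl fun j hj => by rw [hfib' j hj]).trans ?_
  rw [himg]

lemma exists_smul_eq (i₀ j : Fin n) : ∃ g : H.Elem, g • i₀ = j := by
  classical
  by_contra! h
  have := sum_smul (H := H) i₀ (fun i => if i = j then 1 else 0 : Fin n → ℕ)
  simp [h] at this

lemma sum_zsign_eq_zero_of_mem {x : Vec n} (hx : x ∈ H.C) (h0 : x ≠ 0) (hu : x ≠ allOne n) :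
    ∑ i, (zsign (x i) : ℤ) = 0 := by
  have := H.dist_eq 0 H.zero_mem x hx h0.symm (by rwa [zero_add])
  rw [sum_zsign_eq, ← hammingDist_zero_left]
  omega

variable (H) in
def signAt (i₀ : Fin n) (g : H.Elem) : ℤˣ := zsign ((g : Vec n) i₀)

theorem isNegaPerfect_signAt (i₀ : Fin n) : IsNegaPerfect H.u (H.signAt i₀) where
  apply_mul_eq_neg g := by
    simp only [signAt, val_u_mul, Pi.add_apply, allOne, zsign_add, zsign_one, neg_one_mul]
  sum_mul_eq_zero w hw₁ hwu := by
    have hterm : ∀ g : H.Elem, (H.signAt i₀ g : ℤ) * H.signAt i₀ (g * w) =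
        zsign ((w : Vec n) (g⁻¹ • i₀)) := fun g => by
      rw [← Units.val_mul]
      simp only [signAt, val_mul_eq_add_smul, Pi.add_apply, zsign_add, smul_vec_apply,
        ← mul_assoc, Int.units_mul_self, one_mul]
    simp only [hterm]
    rw [← Equiv.sum_comp (Equiv.inv H.Elem)]
    simp only [Equiv.inv_apply, inv_inv]
    rw [sum_smul (M := ℤ) i₀ (fun i => (zsign ((w : Vec n) i) : ℤ)),
      sum_zsign_eq_zero_of_mem w.2 (fun h => hw₁ (Subtype.ext h)) (fun h => hwu (Subtype.ext h)),
      smul_zero]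

end HFPCode

section Kernel

variable {n : ℕ}

lemma zero_mem_kerSet (C : Set (Vec n)) : 0 ∈ kerSet C := by
  simp [kerSet]

lemma add_mem_kerSet {C : Set (Vec n)} {z z' : Vec n} (hz : z ∈ kerSet C) (hz' : z' ∈ kerSet C) :
    z + z' ∈ kerSet C := by
  show (fun x => z + z' + x) '' C = C
  calc (fun x => z + z' + x) '' C = (fun x => z + x) '' ((fun x => z' + x) '' C) := by
        rw [Set.image_image]; simp only [add_assoc]
    _ = C := by rw [hz', hz]

lemma add_mem_of_mem_kerSet {C : Set (Vec n)} {z x : Vec n} (hz : z ∈ kerSet C) (hx : x ∈ C) :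
    z + x ∈ C :=
  hz ▸ Set.mem_image_of_mem _ hx

lemma mem_kerSet_of_forall_add_mem {C : Set (Vec n)} {z : Vec n} (h : ∀ x ∈ C, z + x ∈ C) :
    z ∈ kerSet C :=
  Set.eq_of_subset_of_ncard_le (by rintro _ ⟨x, hx, rfl⟩; exact h x hx)
    (by rw [Set.ncard_image_of_injective _ (add_right_injective z)]) (Set.toFinite _)

def kerSubmodule (C : Set (Vec n)) : Submodule (ZMod 2) (Vec n) where
  carrier := kerSet C
  add_mem' := add_mem_kerSet
  zero_mem' := zero_mem_kerSet C
  smul_mem' c z hz := by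
    rcases (by decide : ∀ c : ZMod 2, c = 0 ∨ c = 1) c with rfl | rfl
    · rw [zero_smul]; exact zero_mem_kerSet C
    · rwa [one_smul]

lemma card_kerSubmodule (C : Set (Vec n)) : Nat.card (kerSubmodule C) = 2 ^ kerDim C := by
  rw [Module.natCard_eq_pow_finrank (K := ZMod 2), Nat.card_zmod, kerDim,
    show kerSet C = (kerSubmodule C : Set (Vec n)) from rfl, Submodule.span_eq]

open Classical in
/-- Count `∑_{v ∈ K} ∑_j (-1)^(v_j + v_{i₀})` in both orders. -/
theorem card_mul_card_eq {K : Submodule (ZMod 2) (Vec n)} (hu : allOne n ∈ K)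
    (hbal : ∀ v ∈ K, v ≠ 0 → v ≠ allOne n → ∑ i, (zsign (v i) : ℤ) = 0) (i₀ : Fin n) :
    Nat.card K * #{j | ∀ v ∈ K, v j = v i₀} = 2 * n := by
  have : Fintype K := Fintype.ofFinite _
  have hrow : ∀ v : K, ∑ j, (zsign (v.1 j + v.1 i₀) : ℤ) =
      (zsign (v.1 i₀) : ℤ) * ∑ j, (zsign (v.1 j) : ℤ) := fun v => by
    rw [mul_sum]; exact sum_congr rfl fun j _ => by rw [zsign_add, Units.val_mul, mul_comm]
  have hcol : ∀ j, ∑ v : K, (zsign (v.1 j + v.1 i₀) : ℤ) =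
      if ∀ v ∈ K, v j = v i₀ then (Nat.card K : ℤ) else 0 := fun j => by
    split_ifs with hj
    · simp [fun v : K => hj v.1 v.2, CharTwo.add_self_eq_zero, Nat.card_eq_fintype_card]
    · push Not at hj
      obtain ⟨v₀, hv₀, hne⟩ := hj
      refine sum_zsign_eq_zero_of_add _ ⟨v₀, hv₀⟩ fun v => ?_
      simp only [Submodule.coe_add, Pi.add_apply]
      linear_combination (by decide : ∀ x y : ZMod 2, x ≠ y → x + y = 1) _ _ hne
  have hu0 : (⟨allOne n, hu⟩ : K) ≠ 0 := fun h => by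
    simpa [allOne] using congrFun (congrArg Subtype.val h) i₀
  have h₁ := Fintype.sum_eq_add (f := fun v : K => ∑ j, (zsign (v.1 j + v.1 i₀) : ℤ)) 0 _
    hu0.symm fun v hv => by
      rw [hrow, hbal v.1 v.2 (fun h => hv.1 (Subtype.ext h)) (fun h => hv.2 (Subtype.ext h)),
        mul_zero]
  rw [sum_comm, sum_congr rfl fun j _ => hcol j, ← sum_filter, sum_const] at h₁
  simp only [ZeroMemClass.coe_zero, Pi.zero_apply, zsign_zero, allOne,
    CharTwo.add_self_eq_zero, sum_const, card_univ, Fintype.card_fin, Units.val_one, nsmul_eq_mul,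
    mul_one] at h₁
  have : ((Nat.card K * #{j | ∀ v ∈ K, v j = v i₀} : ℕ) : ℤ) = 2 * n := by push_cast; linarith
  exact_mod_cast this

end Kernel

namespace HFPCode

variable {n : ℕ} {H : HFPCode n}

lemma mem_of_mem_kerSubmodule {z : Vec n} (hz : z ∈ kerSubmodule H.C) : z ∈ H.C := by
  simpa using add_mem_of_mem_kerSet hz H.zero_mem

lemma allOne_mem_kerSubmodule : allOne n ∈ kerSubmodule H.C :=
  mem_kerSet_of_forall_add_mem fun x hx => by rw [add_comm]; exact H.add_allOne_mem x hx

lemma smul_mem_kerSubmodule (g : H.Elem) {z : Vec n} (hz : z ∈ kerSubmodule H.C) :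
    g • z ∈ kerSubmodule H.C :=
  mem_kerSet_of_forall_add_mem fun x hx => by
    have hzy := add_mem_of_mem_kerSet hz (g⁻¹ * ⟨x, hx⟩ : H.Elem).2
    have := (g * ⟨_, hzy⟩ : H.Elem).2
    rwa [val_mul_eq_add_smul, smul_add, add_left_comm, ← val_mul_eq_add_smul,
      mul_inv_cancel_left] at this

lemma mem_fixingSubgroup_kerSubmodule_iff (hcomm : ∀ x y : H.Elem, x * y = y * x) (i₀ : Fin n)
    {g : H.Elem} : g ∈ fixingSubgroup H.Elem (kerSubmodule H.C : Set (Vec n)) ↔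
      ∀ v ∈ kerSubmodule H.C, v (g • i₀) = v i₀ := by
  simp only [mem_fixingSubgroup_iff, SetLike.mem_coe]
  refine ⟨fun hg v hv => ?_, fun hg => ?_⟩
  · calc v (g • i₀) = (g⁻¹ • v) i₀ := by rw [smul_vec_apply, inv_inv]
      _ = v i₀ := by rw [inv_smul_eq_iff.2 (hg v hv).symm]
  · intro v hv
    funext j
    obtain ⟨h, rfl⟩ := exists_smul_eq (H := H) i₀ j
    have hw := hg (g • h⁻¹ • v) (smul_mem_kerSubmodule _ (smul_mem_kerSubmodule _ hv))
    simp only [smul_vec_apply, inv_smul_smul, inv_inv] at hw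
    rw [smul_vec_apply, smul_smul, hcomm, mul_smul, ← hw]

open Classical in
lemma card_fixingSubgroup_kerSubmodule (hcomm : ∀ x y : H.Elem, x * y = y * x) (i₀ : Fin n) :
    Nat.card (fixingSubgroup H.Elem (kerSubmodule H.C : Set (Vec n))) =
      2 * #{j | ∀ v ∈ kerSubmodule H.C, v j = v i₀} := by
  rw [Nat.card_eq_fintype_card, Fintype.card_subtype]
  simp only [mem_fixingSubgroup_kerSubmodule_iff hcomm i₀, card_filter]
  rw [sum_smul (H := H) i₀ (fun j => if ∀ v ∈ kerSubmodule H.C, v j = v i₀ then 1 else 0),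
    smul_eq_mul]

lemma index_fixingSubgroup_kerSubmodule (hcomm : ∀ x y : H.Elem, x * y = y * x) (i₀ : Fin n) :
    (fixingSubgroup H.Elem (kerSubmodule H.C : Set (Vec n))).index = 2 ^ (kerDim H.C - 1) := by
  classical
  have h₁ := (fixingSubgroup H.Elem (kerSubmodule H.C : Set (Vec n))).card_mul_index
  rw [card_fixingSubgroup_kerSubmodule hcomm i₀, Nat.card_eq_fintype_card, card_elem] at h₁
  have h₂ := card_mul_card_eq (allOne_mem_kerSubmodule (H := H))
    (fun _ hv h0 hu => sum_zsign_eq_zero_of_mem (mem_of_mem_kerSubmodule hv) h0 hu) i₀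
  rw [card_kerSubmodule] at h₂
  have hcls : 0 < #{j | ∀ v ∈ kerSubmodule H.C, v j = v i₀} :=
    card_pos.2 ⟨i₀, mem_filter.2 ⟨mem_univ _, fun _ _ => rfl⟩⟩
  have h : 2 * (fixingSubgroup H.Elem (kerSubmodule H.C : Set (Vec n))).index = 2 ^ kerDim H.C :=
    Nat.eq_of_mul_eq_mul_right hcls (by rw [h₂, ← h₁]; ring)
  obtain ⟨k, hk⟩ := Nat.exists_eq_succ_of_ne_zero (n := kerDim H.C) fun h0 => by
    rw [h0] at h; omega
  rw [hk, pow_succ] at h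
  rw [hk, Nat.succ_sub_one]
  omega

noncomputable instance : DistribMulAction H.Elem (kerSubmodule H.C) where
  smul g v := ⟨g • v.1, smul_mem_kerSubmodule g v.2⟩
  one_smul v := Subtype.ext (one_smul _ v.1)
  mul_smul g h v := Subtype.ext (mul_smul g h v.1)
  smul_zero g := Subtype.ext (smul_zero g)
  smul_add g v w := Subtype.ext (smul_add g v.1 w.1)

variable (H) in
def allOneLine : AddSubgroup (kerSubmodule H.C) :=
  (ZMod 2 ∙ (⟨allOne n, allOne_mem_kerSubmodule⟩ : kerSubmodule H.C)).toAddSubgroup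

lemma mem_allOneLine_iff {v : kerSubmodule H.C} :
    v ∈ H.allOneLine ↔ ∃ c : ZMod 2, (v : Vec n) = fun _ => c := by
  rw [allOneLine, Submodule.mem_toAddSubgroup, Submodule.mem_span_singleton]
  constructor
  · rintro ⟨c, rfl⟩
    exact ⟨c, funext fun _ => by simp [allOne]⟩
  · rintro ⟨c, hc⟩
    exact ⟨c, Subtype.ext (funext fun _ => by simp [hc, allOne])⟩

lemma smul_mem_allOneLine (g : H.Elem) {v : kerSubmodule H.C} (hv : v ∈ H.allOneLine) :
    g • v ∈ H.allOneLine := by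
  obtain ⟨c, hc⟩ := mem_allOneLine_iff.1 hv
  exact mem_allOneLine_iff.2 ⟨c, by show g • v.1 = _; rw [hc, smul_const]⟩

lemma two_dvd_index_allOneLine (hk : 1 < kerDim H.C) : 2 ∣ H.allOneLine.index := by
  have h := H.allOneLine.card_mul_index
  have hu0 : (⟨allOne n, allOne_mem_kerSubmodule⟩ : kerSubmodule H.C) ≠ 0 := fun h =>
    H.allOne_ne_zero (congrArg Subtype.val h)
  have hcard : Nat.card H.allOneLine = 2 := by
    show Nat.card (ZMod 2 ∙ (⟨allOne n, allOne_mem_kerSubmodule⟩ : kerSubmodule H.C)) = 2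
    rw [Module.natCard_eq_pow_finrank (K := ZMod 2), finrank_span_singleton hu0, Nat.card_zmod,
      pow_one]
  obtain ⟨k, hk'⟩ : ∃ k, kerDim H.C = k + 2 := ⟨kerDim H.C - 2, by omega⟩
  rw [hcard, card_kerSubmodule, hk', pow_add] at h
  exact ⟨2 ^ k, by omega⟩

lemma exists_smul_eq_add_const (hcomm : ∀ x y : H.Elem, x * y = y * x) (i₀ : Fin n)
    (hk : 1 < kerDim H.C) : ∃ z ∈ kerSubmodule H.C, z ≠ 0 ∧ z i₀ = 0 ∧
      ∀ g : H.Elem, ∃ c : ZMod 2, g • z = z + fun _ => c := by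
  set K := kerSubmodule H.C
  obtain ⟨v, hvU, hv⟩ := exists_smul_sub_mem_of_index_eq_prime_pow (p := 2) H.allOneLine
    smul_mem_allOneLine _ (fun g hg v => Subtype.ext ((mem_fixingSubgroup_iff _).1 hg v.1 v.2))
    (index_fixingSubgroup_kerSubmodule hcomm i₀) (two_dvd_index_allOneLine hk)
  have hconst : ∀ c : ZMod 2, (fun _ => c : Vec n) ∈ K := fun c => by
    convert K.smul_mem c allOne_mem_kerSubmodule using 1
    funext; simp [allOne]
  refine ⟨v.1 + fun _ => v.1 i₀, K.add_mem v.2 (hconst _),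
    fun h => hvU (mem_allOneLine_iff.2 ?_), CharTwo.add_self_eq_zero _, fun g => ?_⟩
  · exact ⟨v.1 i₀, funext fun i => CharTwo.add_eq_zero.1 (congrFun h i)⟩
  · obtain ⟨c, hc⟩ := mem_allOneLine_iff.1 (hv g)
    have hgv : g • v.1 = (fun _ => c) + v.1 := sub_eq_iff_eq_add.1 hc
    refine ⟨c, ?_⟩
    rw [smul_add, hgv, smul_const]
    abel

theorem exists_twistedPeriod (hcomm : ∀ x y : H.Elem, x * y = y * x) (i₀ : Fin n)
    (hk : 1 < kerDim H.C) :
    ∃ (χ : H.Elem →* ℤˣ) (z : H.Elem), χ ≠ 1 ∧ IsTwistedPeriod (H.signAt i₀) χ z := by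
  obtain ⟨z, hzK, hz0, hzi, hz⟩ := exists_smul_eq_add_const hcomm i₀ hk
  have hε : ∀ g : H.Elem, g • z = z + fun _ => (g • z) i₀ := fun g => by
    obtain ⟨c, hc⟩ := hz g
    rw [hc]
    simp [hzi]
  let χ : H.Elem →* ℤˣ :=
    { toFun g := zsign ((g • z) i₀)
      map_one' := by rw [one_smul, hzi, zsign_zero]
      map_mul' g h := by
        simp only [mul_smul]
        conv_lhs => rw [hε h, smul_add, smul_const, Pi.add_apply, zsign_add] }
  refine ⟨χ, ⟨z, mem_of_mem_kerSubmodule hzK⟩, fun hχ => hz0 (funext fun j => ?_), fun g => ?_⟩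
  · obtain ⟨g, rfl⟩ := exists_smul_eq (H := H) i₀ j
    have := (zsign_eq_one_iff _).1 (DFunLike.congr_fun hχ g⁻¹)
    rwa [smul_vec_apply, inv_inv] at this
  · show zsign ((g : Vec n) i₀ + (g • z) i₀) = zsign ((g • z) i₀) * zsign ((g : Vec n) i₀)
    rw [zsign_add, mul_comm]

lemma val_pow (x : H.Elem) (i : ℕ) : ((x ^ i : H.Elem) : Vec n) = H.pow x i := by
  induction i with
  | zero => rfl
  | succ i ih => rw [pow_succ', val_mul, ih]; rfl

variable {t : ℕ} {H : HFPCode (4 * t)} {a b : Vec (4 * t)}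

lemma Is4tu2.isCyclicProdC2 (hC : Is4tu2 t H a b) :
    IsCyclicProdC2 t (⟨a, hC.1⟩ : H.Elem) ⟨b, hC.2.1⟩ := by
  obtain ⟨-, -, -, ha4, hapos, -, hb2, -, hbna, hgen⟩ := hC
  refine ⟨?_, Subtype.ext (by rw [val_pow, hb2]; rfl), fun i h => hbna i ?_, fun g => ?_⟩
  · rw [orderOf_eq_iff (by have := H.pos; omega)]
    exact ⟨Subtype.ext (by rw [val_pow, ha4]; rfl),
      fun m hm hm0 h => hapos m hm0 hm (by simpa [val_pow] using congrArg Subtype.val h)⟩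
  · simpa [val_pow] using congrArg Subtype.val h
  · obtain ⟨i, j, hij⟩ := hgen g g.2
    exact ⟨i, j, Subtype.ext (by rw [hij, val_mul, val_pow, val_pow])⟩

theorem Is4tu2.le_two (hC : Is4tu2 t H a b) (hk : 1 < kerDim H.C) : t ≤ 2 := by
  have hcomm : ∀ x y : H.Elem, x * y = y * x := fun x y => Subtype.ext (hC.2.2.1 x x.2 y y.2)
  let _ : CommGroup H.Elem := { mul_comm := hcomm }
  have hu : (⟨a, hC.1⟩ : H.Elem) ^ (2 * t) = H.u :=
    Subtype.ext (by rw [val_pow, hC.2.2.2.2.2.1]; rfl)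
  obtain ⟨χ, z, hχ, hz⟩ := exists_twistedPeriod hcomm ⟨0, H.pos⟩ hk
  exact (hu ▸ isNegaPerfect_signAt _).le_two hC.isCyclicProdC2 hχ hz

end HFPCode

/-- If an HFP(4t_u,2)-code of length `4t` has kernel of dimension `> 1`,
then `4t` is a power of two. -/
theorem length_pow_two_of_kerDim_gt_one (t : ℕ) (H : HFPCode (4 * t)) (a b : Vec (4 * t))
    (hC : HFPCode.Is4tu2 t H a b)
    (hk : 1 < kerDim H.C) :
    ∃ s : ℕ, 4 * t = 2 ^ s := by
  have ht : 0 < t := by have := H.pos; omega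
  have ht₂ := hC.le_two hk
  interval_cases t
  · exact ⟨2, rfl⟩
  · exact ⟨3, rfl⟩
end

section
/- Let C be an HFP(2t,2,2_u)-code of length 4t with t > 1, with normalized permutations π_a = (1,2,…,2t)(2t+1,2t+2,…,4t) and π_b = (1,2t+1)(2,2t+2)⋯(2t,4t). Then the vector (e_{2t},u_{2t}) does not belong to the kernel K(C). -/
open Finset

/-!
Suppose `z = (e_{2t}, u_{2t})` lies in the kernel. Then `z ∈ C`, so `z = a^i * b^j * w` with
`w ∈ {e, u}`. As `π_a` preserves both halves and `π_b` swaps them, `z * z = z + π_z(z)` is `e` or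
`u` according as `j = 0` or `j = 1`; but `z * z = a^(2i)`, and the only power of `a` in `{e, u}`
is `e`. Hence `j = 0` and `i ∈ {0, t}`, and `i = 0` would make `z` constant, so `a^t = z + w`.

Then `π_a` fixes `a^t`, which forces `π_a^t(a) = a`: `a` is `t`-periodic inside each half.
Evaluating `a^t = ∑_{l<t} π_a^l(a)` at the last coordinate of the first and of the third quarter
shows that the weights of `a` on these two quarters have different parities. On the other hand
`a ∉ z + {e, u}` (otherwise `a^(t+1) = a + a^t ∈ {e, u}`, impossible for `t > 1`), so
`d(z, a) = 2t`; by periodicity `z + a` then has weight `t` on the first and third quarters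
together, which says that the two parities agree.
-/

section PermAct

variable {n : ℕ}

lemma Vec.add_self (x : Vec n) : x + x = 0 := funext fun i => CharTwo.add_self_eq_zero (x i)

lemma permAct_add (σ : Equiv.Perm (Fin n)) (x y : Vec n) :
    permAct σ (x + y) = permAct σ x + permAct σ y := rfl

lemma permAct_sum {ι : Type*} (σ : Equiv.Perm (Fin n)) (s : Finset ι) (g : ι → Vec n) :
    permAct σ (∑ i ∈ s, g i) = ∑ i ∈ s, permAct σ (g i) := by
  funext c
  simp [permAct, Finset.sum_apply]

lemma permAct_eq_iff {σ : Equiv.Perm (Fin n)} {x y : Vec n} :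
    permAct σ x = y ↔ ∀ c, y (σ c) = x c := by
  constructor
  · rintro rfl c
    simp [permAct]
  · intro h
    funext c
    simpa [permAct] using (h (σ⁻¹ c)).symm

lemma permAct_pow_of_permAct_eq_self {σ : Equiv.Perm (Fin n)} {x : Vec n}
    (h : permAct σ x = x) (m : ℕ) : permAct (σ ^ m) x = x := by
  induction m with
  | zero => rfl
  | succ m ih => rw [pow_succ', permAct_mul, ih, h]

end PermAct

def constVecs (n : ℕ) : Set (Vec n) := {0, allOne n}

section ConstVecs

variable {n : ℕ} {w w' : Vec n}

lemma zero_mem_constVecs : (0 : Vec n) ∈ constVecs n := Or.inl rfl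

lemma allOne_mem_constVecs : allOne n ∈ constVecs n := Or.inr rfl

lemma permAct_of_mem_constVecs (hw : w ∈ constVecs n) (σ : Equiv.Perm (Fin n)) :
    permAct σ w = w := by
  rcases hw with rfl | rfl <;> rfl

lemma apply_eq_of_mem_constVecs (hw : w ∈ constVecs n) (c d : Fin n) : w c = w d := by
  rcases hw with rfl | rfl <;> rfl

lemma add_mem_constVecs (hw : w ∈ constVecs n) (hw' : w' ∈ constVecs n) :
    w + w' ∈ constVecs n := by
  rcases hw with rfl | rfl <;> rcases hw' with rfl | rfl
  · simpa using zero_mem_constVecs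
  · simpa using allOne_mem_constVecs
  · simpa using allOne_mem_constVecs
  · simpa [Vec.add_self] using zero_mem_constVecs

end ConstVecs

lemma mem_of_mem_kerSet {n : ℕ} {C : Set (Vec n)} {z : Vec n} (h0 : 0 ∈ C)
    (hz : z ∈ kerSet C) : z ∈ C := by
  rw [← hz]
  exact ⟨0, h0, add_zero z⟩

namespace HFPCode

variable {n : ℕ} (H : HFPCode n) {x y w : Vec n}

@[simp] lemma mul_zero (x : Vec n) : H.mul x 0 = x := add_zero x

@[simp] lemma zero_mul (x : Vec n) : H.mul 0 x = x := by
  rw [mul, H.π_zero, zero_add]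
  rfl

@[simp] lemma pow_zero (x : Vec n) : H.pow x 0 = 0 := rfl

@[simp] lemma pow_one (x : Vec n) : H.pow x 1 = x := H.mul_zero x

lemma mul_of_mem_constVecs (x : Vec n) (hw : w ∈ constVecs n) : H.mul x w = x + w := by
  rw [mul, permAct_of_mem_constVecs hw]

lemma π_of_mem_constVecs (hw : w ∈ constVecs n) : H.π w = 1 := by
  rcases hw with rfl | rfl
  exacts [H.π_zero, H.π_allOne]

lemma mem_of_mem_constVecs (hw : w ∈ constVecs n) : w ∈ H.C := by
  rcases hw with rfl | rfl
  exacts [H.zero_mem, H.allOne_mem]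

lemma mul_comm_of_mem_constVecs (hw : w ∈ constVecs n) (x : Vec n) : H.mul w x = H.mul x w := by
  rw [H.mul_of_mem_constVecs x hw, mul, H.π_of_mem_constVecs hw, add_comm]
  rfl

lemma mul_mem_of_mem (hx : x ∈ H.C) (hy : y ∈ H.C) : H.mul x y ∈ H.C := H.mul_mem x hx y hy

lemma π_mul_of_mem (hx : x ∈ H.C) (hy : y ∈ H.C) : H.π (H.mul x y) = H.π x * H.π y :=
  H.π_mul x hx y hy

lemma π_add_of_mem_constVecs (hx : x ∈ H.C) (hw : w ∈ constVecs n) : H.π (x + w) = H.π x := by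
  rw [← H.mul_of_mem_constVecs x hw, H.π_mul_of_mem hx (H.mem_of_mem_constVecs hw),
    H.π_of_mem_constVecs hw, mul_one]

lemma mul_assoc (hx : x ∈ H.C) (hy : y ∈ H.C) (w : Vec n) :
    H.mul (H.mul x y) w = H.mul x (H.mul y w) := by
  rw [mul, H.π_mul_of_mem hx hy, permAct_mul, mul, mul, mul, permAct_add, add_assoc]

lemma pow_mem (hx : x ∈ H.C) (m : ℕ) : H.pow x m ∈ H.C := by
  induction m with
  | zero => exact H.zero_mem
  | succ m ih => exact H.mul_mem_of_mem hx ih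

lemma π_pow (hx : x ∈ H.C) (m : ℕ) : H.π (H.pow x m) = H.π x ^ m := by
  induction m with
  | zero => exact H.π_zero
  | succ m ih => rw [pow, H.π_mul_of_mem hx (H.pow_mem hx m), ih, _root_.pow_succ']

lemma pow_add (hx : x ∈ H.C) (m k : ℕ) :
    H.pow x (m + k) = H.mul (H.pow x m) (H.pow x k) := by
  induction m with
  | zero => simp
  | succ m ih =>
    rw [Nat.add_right_comm, pow, ih, ← H.mul_assoc hx (H.pow_mem hx m)]
    rfl

lemma pow_succ_eq_mul (hx : x ∈ H.C) (m : ℕ) : H.pow x (m + 1) = H.mul (H.pow x m) x := by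
  rw [H.pow_add hx, pow_one]

lemma pow_mod (hx : x ∈ H.C) {m : ℕ} (hm : H.pow x m = 0) (k : ℕ) :
    H.pow x k = H.pow x (k % m) := by
  have hmul : ∀ q, H.pow x (m * q) = 0 := by
    intro q
    induction q with
    | zero => rfl
    | succ q ih => rw [Nat.mul_succ, H.pow_add hx, ih, hm, zero_mul]
  conv_lhs => rw [← Nat.div_add_mod k m, H.pow_add hx, hmul, zero_mul]

lemma pow_apply (m : ℕ) (c : Fin n) :
    H.pow x m c = ∑ l ∈ range m, x ((H.π x ^ l)⁻¹ c) := by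
  suffices H.pow x m = ∑ l ∈ range m, permAct (H.π x ^ l) x by
    rw [this, Finset.sum_apply]
    rfl
  induction m with
  | zero => simp
  | succ m ih =>
    rw [pow, mul, ih, permAct_sum, sum_range_succ', _root_.pow_zero, add_comm]
    simp only [← permAct_mul, ← _root_.pow_succ']
    rfl

lemma mul_self_mul (hx : x ∈ H.C) (hy : y ∈ H.C) (hyx : H.mul y x = H.mul x y) :
    H.mul (H.mul x y) (H.mul x y) = H.mul (H.mul x x) (H.mul y y) := by
  rw [H.mul_assoc hx hy, ← H.mul_assoc hy hx, hyx, H.mul_assoc hx hy, ← H.mul_assoc hx hx]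

lemma mul_self_of_mem_constVecs (hw : w ∈ constVecs n) : H.mul w w = 0 := by
  rw [H.mul_of_mem_constVecs w hw, Vec.add_self]

lemma pow_allOne_mem_constVecs (k : ℕ) : H.pow (allOne n) k ∈ constVecs n := by
  induction k with
  | zero => exact zero_mem_constVecs
  | succ k ih =>
    rw [pow, mul, H.π_allOne]
    exact add_mem_constVecs allOne_mem_constVecs ih

lemma permAct_pow_self_of_permAct_pow_eq (hx : x ∈ H.C) {m : ℕ}
    (h : permAct (H.π x) (H.pow x m) = H.pow x m) : permAct (H.π x ^ m) x = x := by
  have h₁ : H.pow x (m + 1) = x + H.pow x m := by rw [pow, mul, h]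
  have h₂ : H.pow x (m + 1) = H.pow x m + permAct (H.π x ^ m) x := by
    rw [H.pow_succ_eq_mul hx, mul, H.π_pow hx]
  rw [h₁, add_comm] at h₂
  exact (add_left_cancel h₂).symm

end HFPCode

section Quarters

variable {t : ℕ}

def quarterCoord (t : ℕ) (k : Fin 4) (r : Fin t) : Fin (4 * t) := finProdFinEquiv (k, r)

@[simp] lemma quarterCoord_val (k : Fin 4) (r : Fin t) :
    (quarterCoord t k r : ℕ) = r + t * k :=
  finProdFinEquiv_apply_val _

def quarterSum (x : Vec (4 * t)) (k : Fin 4) : ZMod 2 := ∑ r, x (quarterCoord t k r)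

lemma sum_eq_sum_quarterCoord {M : Type*} [AddCommMonoid M] (g : Fin (4 * t) → M) :
    ∑ c, g c = ∑ r, (g (quarterCoord t 0 r) + g (quarterCoord t 1 r)
      + g (quarterCoord t 2 r) + g (quarterCoord t 3 r)) := by
  rw [← finProdFinEquiv.sum_comp, Fintype.sum_prod_type, Fin.sum_univ_four]
  simp only [quarterCoord, sum_add_distrib]

lemma euVec_quarterCoord (k : Fin 4) (r : Fin t) :
    euVec t (quarterCoord t k r) = if (k : ℕ) < 2 then 0 else 1 := by
  have := r.isLt
  fin_cases k <;> simp [euVec] <;> omega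

lemma euVec_not_mem_constVecs (ht : 0 < t) : euVec t ∉ constVecs (4 * t) := by
  rintro (h | h)
  · simpa [euVec] using congrFun h ⟨2 * t, by omega⟩
  · simpa [euVec, allOne, ht] using congrFun h ⟨0, by omega⟩

lemma natCast_ite_ne (x y : ZMod 2) : (((if x ≠ y then 1 else 0 : ℕ)) : ZMod 2) = x + y := by
  revert x y
  decide

lemma quarterSum_zero_add_quarterSum_two_of_hammingDist {x : Vec (4 * t)}
    (hper : ∀ r, x (quarterCoord t 1 r) = x (quarterCoord t 0 r) ∧
      x (quarterCoord t 3 r) = x (quarterCoord t 2 r))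
    (hd : 2 * hammingDist (euVec t) x = 4 * t) :
    quarterSum x 0 + quarterSum x 2 = 0 := by
  set δ : Fin (4 * t) → ℕ := fun c => if euVec t c ≠ x c then 1 else 0
  have hδ : ∀ r, δ (quarterCoord t 1 r) = δ (quarterCoord t 0 r) ∧
      δ (quarterCoord t 3 r) = δ (quarterCoord t 2 r) := by
    intro r
    simp only [δ, euVec_quarterCoord, (hper r).1, (hper r).2]
    simp
  have hcount : ∑ r, (δ (quarterCoord t 0 r) + δ (quarterCoord t 2 r)) = t := by
    have hsum : hammingDist (euVec t) x = ∑ c, δ c := card_filter _ _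
    have hpair : ∀ r, δ (quarterCoord t 0 r) + δ (quarterCoord t 1 r) + δ (quarterCoord t 2 r)
        + δ (quarterCoord t 3 r) = 2 * (δ (quarterCoord t 0 r) + δ (quarterCoord t 2 r)) := by
      intro r
      rw [(hδ r).1, (hδ r).2]
      ring
    rw [hsum, sum_eq_sum_quarterCoord, sum_congr rfl fun r _ => hpair r, ← mul_sum] at hd
    omega
  have hcast : ((∑ r, (δ (quarterCoord t 0 r) + δ (quarterCoord t 2 r)) : ℕ) : ZMod 2)
      = ∑ r, (x (quarterCoord t 0 r) + (1 + x (quarterCoord t 2 r))) := by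
    push_cast
    refine sum_congr rfl fun r _ => ?_
    simp only [δ, natCast_ite_ne, euVec_quarterCoord]
    simp
  rw [hcount, sum_add_distrib, sum_add_distrib, sum_const, card_univ, Fintype.card_fin,
    nsmul_one, add_left_comm] at hcast
  exact left_eq_add.mp hcast

end Quarters

namespace HFPCode

variable {t : ℕ} {H : HFPCode (4 * t)} {a b w : Vec (4 * t)}

lemma NormPiA.apply_val (hπa : NormPiA t H a) {c : Fin (4 * t)}
    (hsame : c.val < 2 * t ↔ c.val + 1 < 2 * t) (hc : c.val + 1 < 4 * t) :
    (H.π a c).val = c.val + 1 := by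
  rw [hπa c]
  split_ifs with h
  · exact Nat.mod_eq_of_lt (hsame.mp h)
  · rw [Nat.mod_eq_sub_mod (by omega), Nat.mod_eq_of_lt (by omega)]
    omega

lemma NormPiA.pow_apply_eq (hπa : NormPiA t H a) {m : ℕ} {c d : Fin (4 * t)}
    (hd : d.val = c.val + m) (hsame : c.val < 2 * t ↔ d.val < 2 * t) : (H.π a ^ m) c = d := by
  induction m generalizing d with
  | zero => exact Fin.ext hd.symm
  | succ m ih =>
    have hd' : (c.val + m) < 4 * t := by omega
    rw [_root_.pow_succ', Equiv.Perm.mul_apply, ih (d := ⟨c.val + m, hd'⟩) rfl (by simp; omega)]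
    exact Fin.ext ((hπa.apply_val (by simp; omega) (by simp; omega)).trans hd.symm)

lemma NormPiA.permAct_euVec (hπa : NormPiA t H a) : permAct (H.π a) (euVec t) = euVec t := by
  refine permAct_eq_iff.mpr fun c => ?_
  have h := hπa c
  by_cases hc : c.val < 2 * t
  · rw [if_pos hc] at h
    have : (H.π a c).val < 2 * t := h ▸ Nat.mod_lt _ (by omega)
    simp [euVec, hc, this]
  · rw [if_neg hc] at h
    have : ¬ (H.π a c).val < 2 * t := by omega
    simp [euVec, hc, this]

lemma NormPiA.permAct_euVec_add (hπa : NormPiA t H a) (hw : w ∈ constVecs (4 * t)) :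
    permAct (H.π a) (euVec t + w) = euVec t + w := by
  rw [permAct_add, hπa.permAct_euVec, permAct_of_mem_constVecs hw]

lemma NormPiA.quarterCoord_periodic (hπa : NormPiA t H a) {x : Vec (4 * t)}
    (hx : permAct (H.π a ^ t) x = x) (r : Fin t) :
    x (quarterCoord t 1 r) = x (quarterCoord t 0 r) ∧
      x (quarterCoord t 3 r) = x (quarterCoord t 2 r) := by
  have hr := r.isLt
  rw [permAct_eq_iff] at hx
  constructor
  · rw [← hπa.pow_apply_eq (m := t) (c := quarterCoord t 0 r) (d := quarterCoord t 1 r)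
      (by simp) (by simp; omega), hx]
  · rw [← hπa.pow_apply_eq (m := t) (c := quarterCoord t 2 r) (d := quarterCoord t 3 r)
      (by simp; omega) (by simp; omega), hx]

lemma NormPiA.pow_apply_quarterCoord_last (hπa : NormPiA t H a) (k : Fin 4) (hr : t - 1 < t) :
    H.pow a t (quarterCoord t k ⟨t - 1, hr⟩) = quarterSum a k := by
  rw [H.pow_apply, ← Fin.sum_univ_eq_sum_range (fun l => a ((H.π a ^ l)⁻¹ _)), quarterSum,
    ← Equiv.sum_comp Fin.revPerm]
  refine sum_congr rfl fun l _ => congrArg a ?_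
  rw [Equiv.Perm.inv_eq_iff_eq, eq_comm]
  have hl := l.isLt
  apply hπa.pow_apply_eq
  · simp; omega
  · fin_cases k <;> simp <;> omega

lemma NormPiB.permAct_euVec (hπb : NormPiB t H b) :
    permAct (H.π b) (euVec t) = euVec t + allOne (4 * t) := by
  refine permAct_eq_iff.mpr fun c => ?_
  have h := hπb c
  have hc := c.isLt
  by_cases hlt : c.val < 2 * t
  · rw [Nat.mod_eq_of_lt (by omega)] at h
    have : ¬ (H.π b c).val < 2 * t := by omega
    simp [euVec, allOne, hlt, this, CharTwo.add_self_eq_zero]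
  · rw [Nat.mod_eq_sub_mod (by omega), Nat.mod_eq_of_lt (by omega)] at h
    have : (H.π b c).val < 2 * t := by omega
    simp [euVec, allOne, hlt, this]

end HFPCode

lemma Nat.eq_zero_or_eq_of_dvd_add_self {i t : ℕ} (hi : i < 2 * t) (h : 2 * t ∣ i + i) :
    i = 0 ∨ i = t := by
  obtain ⟨c, hc⟩ := h
  have : c < 2 := by nlinarith
  interval_cases c <;> omega

namespace HFPCode

variable {t : ℕ} {H : HFPCode (4 * t)} {a b w : Vec (4 * t)}

lemma Is2t22u.pos (hC : Is2t22u t H a b) : 0 < t := by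
  obtain ⟨-, -, -, -, -, -, -, hu, -⟩ := hC
  by_contra! ht
  obtain rfl : t = 0 := by omega
  exact hu (funext fun i => i.elim0)

lemma Is2t22u.dvd_of_pow_mem_constVecs (hC : Is2t22u t H a b) {m : ℕ}
    (hm : H.pow a m ∈ constVecs (4 * t)) : 2 * t ∣ m := by
  have hlt : m % (2 * t) < 2 * t := Nat.mod_lt _ (by linarith [hC.pos])
  obtain ⟨ha, -, -, ha2t, haord, -, -, -, hindep, -⟩ := hC
  rw [H.pow_mod ha ha2t] at hm
  rcases hm with h | h
  · by_contra hdvd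
    exact haord _ (Nat.pos_of_ne_zero (mt Nat.dvd_of_mod_eq_zero hdvd)) hlt h
  · have h₀ := hindep _ 0 1 hlt (by omega) (by omega) (by
      rw [h, pow_zero, mul_zero, pow_one, H.mul_of_mem_constVecs _ allOne_mem_constVecs,
        Vec.add_self])
    omega

lemma Is2t22u.pow_eq_zero_of_mem_constVecs (hC : Is2t22u t H a b) {m : ℕ}
    (hm : H.pow a m ∈ constVecs (4 * t)) : H.pow a m = 0 := by
  rw [H.pow_mod hC.1 hC.2.2.2.1, Nat.mod_eq_zero_of_dvd (hC.dvd_of_pow_mem_constVecs hm),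
    pow_zero]

lemma Is2t22u.exists_eq_mul_add (hC : Is2t22u t H a b) {x : Vec (4 * t)}
    (hx : x ∈ H.C) :
    ∃ i < 2 * t, ∃ j < 2, ∃ w ∈ constVecs (4 * t), x = H.mul (H.pow a i) (H.pow b j) + w := by
  have ht := hC.pos
  obtain ⟨ha, hb, -, ha2t, -, hb2, -, -, -, hgen⟩ := hC
  obtain ⟨i, j, k, rfl⟩ := hgen x hx
  refine ⟨i % (2 * t), Nat.mod_lt _ (by omega), j % 2, Nat.mod_lt _ two_pos, _,
    H.pow_allOne_mem_constVecs k, ?_⟩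
  rw [H.mul_of_mem_constVecs _ (H.pow_allOne_mem_constVecs k), ← H.pow_mod ha ha2t,
    ← H.pow_mod hb hb2]

lemma Is2t22u.mul_self_mul_add (hC : Is2t22u t H a b) (i j : ℕ) (hw : w ∈ constVecs (4 * t)) :
    H.mul (H.mul (H.pow a i) (H.pow b j) + w) (H.mul (H.pow a i) (H.pow b j) + w)
      = H.pow a (i + i) := by
  obtain ⟨ha, hb, hcomm, -, -, hb2, -⟩ := hC
  have hai := H.pow_mem ha i
  have hbj := H.pow_mem hb j
  have hab : H.mul (H.pow a i) (H.pow b j) ∈ H.C := H.mul_mem_of_mem hai hbj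
  have hbb : H.pow b (j + j) = 0 := by
    rw [H.pow_mod hb hb2, show (j + j) % 2 = 0 by omega, pow_zero]
  rw [← H.mul_of_mem_constVecs _ hw, H.mul_self_mul hab
    (H.mem_of_mem_constVecs hw) (H.mul_comm_of_mem_constVecs hw _), H.mul_self_of_mem_constVecs hw,
    mul_zero, H.mul_self_mul hai hbj (hcomm _ hbj _ hai), ← H.pow_add ha, ← H.pow_add hb, hbb,
    mul_zero]

lemma Is2t22u.exists_pow_half_eq_euVec_add (hC : Is2t22u t H a b) (hπa : NormPiA t H a)
    (hπb : NormPiB t H b) (hz : euVec t ∈ H.C) :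
    ∃ w ∈ constVecs (4 * t), H.pow a t = euVec t + w := by
  have ⟨ha, hb, _, _, _, _, _, hu, _⟩ := hC
  obtain ⟨i, hi, j, hj, w, hw, hzeq⟩ := hC.exists_eq_mul_add hz
  have hsq : H.mul (euVec t) (euVec t) = H.pow a (i + i) := by
    rw [hzeq]
    exact hC.mul_self_mul_add i j hw
  have hπz : H.π (euVec t) = H.π a ^ i * H.π b ^ j := by
    have hai := H.pow_mem ha i
    have hbj := H.pow_mem hb j
    rw [hzeq, H.π_add_of_mem_constVecs (H.mul_mem_of_mem hai hbj) hw, H.π_mul_of_mem hai hbj,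
      H.π_pow ha, H.π_pow hb]
  have hπaz : permAct (H.π a ^ i) (euVec t) = euVec t :=
    permAct_pow_of_permAct_eq_self hπa.permAct_euVec i
  obtain rfl | rfl : j = 0 ∨ j = 1 := by omega
  · have hzz : H.mul (euVec t) (euVec t) = 0 := by
      rw [mul, hπz, _root_.pow_zero, _root_.mul_one, hπaz, Vec.add_self]
    obtain rfl | rfl := Nat.eq_zero_or_eq_of_dvd_add_self hi
      (hC.dvd_of_pow_mem_constVecs (hsq ▸ hzz ▸ zero_mem_constVecs))
    · refine absurd ?_ (euVec_not_mem_constVecs hC.pos)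
      simpa [hzeq] using hw
    · refine ⟨w, hw, ?_⟩
      rw [hzeq, pow_zero, mul_zero, add_assoc, Vec.add_self, add_zero]
  · have hzz : H.mul (euVec t) (euVec t) = allOne (4 * t) := by
      rw [mul, hπz, _root_.pow_one, permAct_mul, hπb.permAct_euVec, permAct_add, hπaz,
        permAct_of_mem_constVecs allOne_mem_constVecs, ← add_assoc, Vec.add_self, zero_add]
    have hau : H.pow a (i + i) = allOne (4 * t) := hsq ▸ hzz
    exact (hu (hau ▸ hC.pow_eq_zero_of_mem_constVecs (hau ▸ allOne_mem_constVecs))).elim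

lemma Is2t22u.two_mul_hammingDist_euVec (hC : Is2t22u t H a b) (hπa : NormPiA t H a)
    (ht : 1 < t) (hz : euVec t ∈ H.C) (hw : w ∈ constVecs (4 * t))
    (hat : H.pow a t = euVec t + w) : 2 * hammingDist (euVec t) a = 4 * t := by
  have hne : ∀ w' ∈ constVecs (4 * t), a ≠ euVec t + w' := by
    rintro w' hw' rfl
    have hsucc : H.pow (euVec t + w') (t + 1) = w' + w := by
      rw [pow, mul, hat, hπa.permAct_euVec_add hw, add_add_add_comm, Vec.add_self, zero_add]
    have hdvd := hC.dvd_of_pow_mem_constVecs (hsucc ▸ add_mem_constVecs hw' hw)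
    exact absurd (Nat.le_of_dvd (by omega) hdvd) (by omega)
  exact H.dist_eq _ hz a hC.1 (by simpa using (hne 0 zero_mem_constVecs).symm)
    (hne _ allOne_mem_constVecs)

lemma Is2t22u.pow_half_ne_euVec_add (hC : Is2t22u t H a b) (hπa : NormPiA t H a)
    (ht : 1 < t) (hz : euVec t ∈ H.C) (hw : w ∈ constVecs (4 * t)) :
    H.pow a t ≠ euVec t + w := by
  intro hat
  have hfix : permAct (H.π a) (H.pow a t) = H.pow a t := hat ▸ hπa.permAct_euVec_add hw
  have hper := hπa.quarterCoord_periodic (H.permAct_pow_self_of_permAct_pow_eq hC.1 hfix)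
  have h₀ := quarterSum_zero_add_quarterSum_two_of_hammingDist hper
    (hC.two_mul_hammingDist_euVec hπa ht hz hw hat)
  have h₁ : quarterSum a 0 + quarterSum a 2 = 1 := by
    have hr : t - 1 < t := by omega
    rw [← hπa.pow_apply_quarterCoord_last 0 hr, ← hπa.pow_apply_quarterCoord_last 2 hr, hat]
    rw [Pi.add_apply, Pi.add_apply, euVec_quarterCoord, euVec_quarterCoord,
      apply_eq_of_mem_constVecs hw (quarterCoord t 2 ⟨t - 1, hr⟩) (quarterCoord t 0 ⟨t - 1, hr⟩)]
    generalize w (quarterCoord t 0 ⟨t - 1, hr⟩) = x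
    revert x
    decide
  exact zero_ne_one (h₀.symm.trans h₁)

end HFPCode

/-- In an HFP(2t,2,2_u)-code of length `4t`, `t > 1`, with normalized permutations,
the vector `(e_{2t},u_{2t})` is not in the kernel. -/
theorem euVec_not_mem_kernel (t : ℕ) (ht : 1 < t) (H : HFPCode (4 * t)) (a b : Vec (4 * t))
    (hC : HFPCode.Is2t22u t H a b)
    (hπa : HFPCode.NormPiA t H a) (hπb : HFPCode.NormPiB t H b) :
    euVec t ∉ kerSet H.C := by
  intro hker
  have hz : euVec t ∈ H.C := mem_of_mem_kerSet H.zero_mem hker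
  obtain ⟨w, hw, hat⟩ := hC.exists_pow_half_eq_euVec_add hπa hπb hz
  exact hC.pow_half_ne_euVec_add hπa ht hz hw hat
end
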